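/- arXiv:1610.02315 — 3 statements merged into one kernel-verified Lean document; each statement's English description precedes it below -/
import Mathlib

section
/- Let F be a field which is a ℚ-algebra, let σ : F ≃+* F be a ring automorphism whose fixed subfield is exactly the image of ℚ (i.e. for all x ∈ F, σ(x) = x implies x lies in the range of the algebra map ℚ → F), and let a, b ∈ ℚ. Let x be an element of the quaternion algebra ℍ[F, a, b] over F, and let σ̂ denote the map applying σ to each of the four components of a quaternion. If σ̂(x) = star x (quaternion conjugation), then x · star x is the image of a rational number, i.e. there exists q ∈ ℚ with x · star x = algebraMap ℚ ℍ[F,a,b] (q). -/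
open scoped Quaternion

/-! The reduced norm `x * star x` is a polynomial in the coordinates of `x` with
coefficients in `ℚ`, so it commutes with applying `σ` componentwise; and it is unchanged by
conjugation. Hence `σ (Nrd x) = Nrd (σ̂ x) = Nrd (star x) = Nrd x`, so `Nrd x` lies in the
fixed field of `σ`, which is `ℚ`. -/

namespace QuaternionAlgebra

variable {R S : Type*} [CommRing R] [CommRing S] {c₁ c₂ : R}

theorem re_mul_star (x : ℍ[R, c₁, c₂]) :
    (x * star x).re = x.re ^ 2 - c₁ * x.imI ^ 2 - c₂ * x.imJ ^ 2 + c₁ * c₂ * x.imK ^ 2 := by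
  simp only [re_mul, re_star, imI_star, imJ_star, imK_star]
  ring

theorem re_mul_star_star (x : ℍ[R, c₁, c₂]) : (star x * star (star x)).re = (x * star x).re := by
  rw [star_star, star_comm_self']

theorem map_re_mul_star {G : Type*} [FunLike G R S] [RingHomClass G R S] (f : G)
    {d₁ d₂ : S} (h₁ : f c₁ = d₁) (h₂ : f c₂ = d₂) (x : ℍ[R, c₁, c₂]) :
    f (x * star x).re =
      ((⟨f x.re, f x.imI, f x.imJ, f x.imK⟩ : ℍ[S, d₁, d₂]) *
        star (⟨f x.re, f x.imI, f x.imJ, f x.imK⟩ : ℍ[S, d₁, d₂])).re := by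
  simp only [re_mul_star, map_add, map_sub, map_mul, map_pow, h₁, h₂]

end QuaternionAlgebra

/-- If `F` is a `ℚ`-algebra field, `σ : F ≃+* F` has fixed field exactly the
image of `ℚ`, and `x` is an element of the quaternion algebra `ℍ[F, a, b]`
(with `a, b` rational) such that applying `σ` componentwise to `x` gives the
quaternion conjugate `star x`, then `x * star x` (the reduced norm) is the
image of a rational number. -/
theorem rational_reduced_norm_of_galois_conjugate_eq_star
    {F : Type*} [Field F] [Algebra ℚ F] (σ : F ≃+* F)
    (hσ : ∀ x : F, σ x = x → x ∈ (algebraMap ℚ F).range)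
    (a b : ℚ)
    (x : ℍ[F, algebraMap ℚ F a, algebraMap ℚ F b])
    (hx : (⟨σ x.re, σ x.imI, σ x.imJ, σ x.imK⟩ :
        ℍ[F, algebraMap ℚ F a, algebraMap ℚ F b]) = star x) :
    ∃ q : ℚ, x * star x = algebraMap ℚ ℍ[F, algebraMap ℚ F a, algebraMap ℚ F b] q := by
  have hσℚ : ∀ q : ℚ, σ (algebraMap ℚ F q) = algebraMap ℚ F q :=
    (σ : F →+* F).map_rat_algebraMap
  have hfix : σ (x * star x).re = (x * star x).re := by
    rw [QuaternionAlgebra.map_re_mul_star σ (hσℚ a) (hσℚ b), hx,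
      QuaternionAlgebra.re_mul_star_star]
  obtain ⟨q, hq⟩ := hσ _ hfix
  exact ⟨q, by rw [QuaternionAlgebra.mul_star_eq_coe, ← hq]; rfl⟩
end

section
/- Let s be a real number with s > 1, let m be a squarefree positive integer, and let χ : ℕ → ℝ be a multiplicative function (χ(1) = 1 and χ(uv) = χ(u)χ(v) for coprime u, v) such that χ(p) ∈ {−1, 1} for every prime p dividing m. Then |∑_{d ∣ m} χ(d) · d^s| ≥ m^s · ∏_{p prime} (1 − p^{−s}), where the product on the right is the convergent infinite product over all primes (equal to 1/ζ(s)). In particular the sum is nonzero. -/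
/-!
By multiplicativity the divisor sum over the squarefree `m` factors as `∏_{p ∣ m} (1 ± p^s)`, and
each factor has absolute value at least `p^s - 1 = p^s (1 - p^{-s})`. As every Euler factor
`1 - p^{-s}` lies in `(0, 1]`, the full Euler product is at most its finite subproduct over
`p ∣ m`. Nonvanishing comes from the positivity of `∏_{p ∣ m} (p^s - 1)`.
-/

open Finset

theorem Nat.sum_divisors_eq_prod_primeFactors_one_add {R : Type*} [CommSemiring R] {f : ℕ → R}
    (h1 : f 1 = 1) (hmul : ∀ u v : ℕ, u.Coprime v → f (u * v) = f u * f v)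
    {n : ℕ} (hn : Squarefree n) :
    ∑ d ∈ n.divisors, f d = ∏ p ∈ n.primeFactors, (1 + f p) := by
  -- `f 0` is reset to `0` to obtain an arithmetic function; divisor sums never see it.
  let F : ArithmeticFunction R := ⟨fun d => if d = 0 then 0 else f d, if_pos rfl⟩
  have hF : F.IsMultiplicative := by
    refine ArithmeticFunction.IsMultiplicative.iff_ne_zero.2
      ⟨by simp [F, h1], fun hu hv huv => ?_⟩
    simp [F, hu, hv, hmul _ _ huv]
  calc ∑ d ∈ n.divisors, f d = ∑ d ∈ n.divisors, F d :=
        sum_congr rfl fun d hd => by simp [F, (Nat.pos_of_mem_divisors hd).ne']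
    _ = ∏ p ∈ n.primeFactors, (1 + F p) := (hF.prodPrimeFactors_one_add_of_squarefree hn).symm
    _ = ∏ p ∈ n.primeFactors, (1 + f p) :=
        prod_congr rfl fun p hp => by simp [F, (Nat.prime_of_mem_primeFactors hp).ne_zero]

theorem sub_one_le_abs_one_add_mul {ε : ℝ} (hε : |ε| = 1) (x : ℝ) : x - 1 ≤ |1 + ε * x| :=
  calc x - 1 ≤ |ε * x| - |1| := by rw [abs_mul, hε, one_mul, abs_one]; linarith [le_abs_self x]
    _ ≤ |1 + ε * x| := by rw [add_comm]; exact abs_sub_abs_le_abs_add _ _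

theorem HasProd.le_prod_of_le_one {ι R : Type*} [CommSemiring R] [PartialOrder R]
    [IsOrderedRing R] [TopologicalSpace R] [ClosedIicTopology R] {f : ι → R} {a : R}
    (hf : HasProd f a) (s : Finset ι) (hf0 : ∀ i, 0 ≤ f i) (hf1 : ∀ i ∉ s, f i ≤ 1) :
    a ≤ ∏ i ∈ s, f i :=
  le_of_tendsto hf <| Filter.eventually_atTop.2 ⟨s, fun _ hst =>
    prod_le_prod_of_subset_of_le_one hst (fun i _ => hf0 i) fun i _ hi => hf1 i hi⟩

namespace Nat.Primes

theorem one_sub_rpow_neg_pos {s : ℝ} (hs : 0 < s) (p : Nat.Primes) :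
    0 < 1 - (p : ℝ) ^ (-s) := by
  have : (p : ℝ) ^ (-s) < 1 :=
    Real.rpow_lt_one_of_one_lt_of_neg (by exact_mod_cast p.prop.one_lt) (by linarith)
  linarith

theorem multipliable_one_sub_rpow_neg {s : ℝ} (hs : 1 < s) :
    Multipliable fun p : Nat.Primes => 1 - (p : ℝ) ^ (-s) := by
  simpa only [sub_eq_add_neg] using Real.multipliable_one_add_of_summable
    (Nat.Primes.summable_rpow.2 (by linarith : -s < -1)).neg

theorem tprod_one_sub_rpow_neg_le_prod_primeFactors {s : ℝ} (hs : 1 < s) (n : ℕ) :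
    ∏' p : Nat.Primes, (1 - (p : ℝ) ^ (-s)) ≤ ∏ p ∈ n.primeFactors, (1 - (p : ℝ) ^ (-s)) := by
  have key := (multipliable_one_sub_rpow_neg hs).hasProd.le_prod_of_le_one
    (n.primeFactors.subtype Nat.Prime)
    (fun p => (one_sub_rpow_neg_pos (by linarith) p).le)
    (fun p _ => sub_le_self _ (by positivity))
  refine key.trans_eq ((prod_subtype_eq_prod_filter (fun p : ℕ => 1 - (p : ℝ) ^ (-s))).trans ?_)
  rw [filter_true_of_mem fun p hp => Nat.prime_of_mem_primeFactors hp]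

end Nat.Primes

theorem Nat.prod_primeFactors_rpow_sub_one {n : ℕ} (hn : Squarefree n) (s : ℝ) :
    ∏ p ∈ n.primeFactors, ((p : ℝ) ^ s - 1)
      = (n : ℝ) ^ s * ∏ p ∈ n.primeFactors, (1 - (p : ℝ) ^ (-s)) := by
  have hfactor : ∀ p ∈ n.primeFactors,
      (p : ℝ) ^ s - 1 = (p : ℝ) ^ s * (1 - (p : ℝ) ^ (-s)) := by
    intro p hp
    have hp0 : (0 : ℝ) < p := by exact_mod_cast (Nat.prime_of_mem_primeFactors hp).pos
    rw [mul_sub, mul_one, ← Real.rpow_add hp0, add_neg_cancel, Real.rpow_zero]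
  rw [prod_congr rfl hfactor, prod_mul_distrib,
    Real.finsetProd_rpow _ _ (fun _ _ => by positivity), ← Nat.cast_prod,
    Nat.prod_primeFactors_of_squarefree hn]

theorem twisted_divisor_sum_lower_bound_general
    (s : ℝ) (hs : 1 < s) (m : ℕ) (hsq : Squarefree m)
    (χ : ℕ → ℝ) (hχ1 : χ 1 = 1)
    (hχmul : ∀ u v : ℕ, Nat.Coprime u v → χ (u * v) = χ u * χ v)
    (hχp : ∀ p : ℕ, p.Prime → p ∣ m → χ p = 1 ∨ χ p = -1) :
    (m : ℝ) ^ s * (∏' p : Nat.Primes, (1 - (p : ℝ) ^ (-s)))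
        ≤ |∑ d ∈ m.divisors, χ d * (d : ℝ) ^ s| ∧
      ∑ d ∈ m.divisors, χ d * (d : ℝ) ^ s ≠ 0 := by
  have hfactor : ∑ d ∈ m.divisors, χ d * (d : ℝ) ^ s
      = ∏ p ∈ m.primeFactors, (1 + χ p * (p : ℝ) ^ s) :=
    Nat.sum_divisors_eq_prod_primeFactors_one_add (by simp [hχ1]) (fun u v huv => by
      rw [hχmul u v huv, Nat.cast_mul, Real.mul_rpow (by positivity) (by positivity)]; ring) hsq
  have hp_rpow : ∀ p ∈ m.primeFactors, 1 < (p : ℝ) ^ s := fun p hp =>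
    Real.one_lt_rpow (by exact_mod_cast (Nat.prime_of_mem_primeFactors hp).one_lt) (by linarith)
  have hlower : ∏ p ∈ m.primeFactors, ((p : ℝ) ^ s - 1)
      ≤ |∑ d ∈ m.divisors, χ d * (d : ℝ) ^ s| := by
    rw [hfactor, abs_prod]
    refine prod_le_prod (fun p hp => by linarith [hp_rpow p hp]) fun p hp => ?_
    have hχ : |χ p| = 1 := by
      rcases hχp p (Nat.prime_of_mem_primeFactors hp) (Nat.dvd_of_mem_primeFactors hp)
        with h | h <;> simp [h]
    exact sub_one_le_abs_one_add_mul hχ _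
  have hpos : 0 < ∏ p ∈ m.primeFactors, ((p : ℝ) ^ s - 1) :=
    prod_pos fun p hp => by linarith [hp_rpow p hp]
  refine ⟨?_, fun h0 => by rw [h0, abs_zero] at hlower; linarith⟩
  calc (m : ℝ) ^ s * ∏' p : Nat.Primes, (1 - (p : ℝ) ^ (-s))
      ≤ (m : ℝ) ^ s * ∏ p ∈ m.primeFactors, (1 - (p : ℝ) ^ (-s)) := by
        gcongr; exact Nat.Primes.tprod_one_sub_rpow_neg_le_prod_primeFactors hs m
    _ = ∏ p ∈ m.primeFactors, ((p : ℝ) ^ s - 1) := (Nat.prod_primeFactors_rpow_sub_one hsq s).symm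
    _ ≤ _ := hlower

/-- For `s > 1`, a squarefree positive integer `m`, and a multiplicative
function `χ` taking values `±1` on the primes dividing `m`, the twisted
divisor sum `∑_{d ∣ m} χ(d)·d^s` has absolute value at least
`m^s · ∏_p (1 − p^{−s})`; in particular it is nonzero. -/
theorem twisted_divisor_sum_lower_bound
    (s : ℝ) (hs : 1 < s) (m : ℕ) (hm : 0 < m) (hsq : Squarefree m)
    (χ : ℕ → ℝ) (hχ1 : χ 1 = 1)
    (hχmul : ∀ u v : ℕ, Nat.Coprime u v → χ (u * v) = χ u * χ v)
    (hχp : ∀ p : ℕ, p.Prime → p ∣ m → χ p = 1 ∨ χ p = -1) :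
    (m : ℝ) ^ s * (∏' p : Nat.Primes, (1 - (p : ℝ) ^ (-s)))
        ≤ |∑ d ∈ m.divisors, χ d * (d : ℝ) ^ s| ∧
      ∑ d ∈ m.divisors, χ d * (d : ℝ) ^ s ≠ 0 :=
  twisted_divisor_sum_lower_bound_general s hs m hsq χ hχ1 hχmul hχp
end

section
/- Let h : ℍ → ℂ be a holomorphic function on the upper half-plane that is modular of weight 2 for SL₂(ℤ), i.e. h((aτ+b)/(cτ+d)) = (cτ+d)²·h(τ) for all [[a,b],[c,d]] ∈ SL₂(ℤ) and τ ∈ ℍ. Suppose there exist M ∈ ℕ and coefficients a : ℤ → ℂ with a(n) = 0 for all n < −M, such that for every τ ∈ ℍ the series ∑_{n ∈ ℤ} a(n)·e^{2πinτ} converges (HasSum) to h(τ). Then the constant term vanishes: a(0) = 0. -/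
open scoped UpperHalfPlane MatrixGroups Manifold Real

/-!
Integrating the Fourier expansion termwise gives a primitive `Φ` of `h` on `ℍ` with
`Φ (τ + 1) = Φ τ + a 0`; termwise differentiation is justified because the series converges
absolutely on `ℍ` and each term is dominated on a horizontal strip by its values on the two
boundary lines. Since `h (τ) dτ` is `SL₂(ℤ)`-invariant, `Φ (γ • τ) - Φ τ` does not depend
on `τ`, so it defines a homomorphism `SL₂(ℤ) → ℂ`. This homomorphism kills the torsion elements
`S` and `ST`, hence also `T = S⁻¹ (ST)`; but its value at `T` is `a 0`.
-/

section FourierPrimitive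

open Complex

lemma norm_cexp_two_pi_I_mul_int_mul (n : ℤ) (z : ℂ) :
    ‖cexp (2 * π * I * n * z)‖ = Real.exp (-(2 * π * n * z.im)) := by
  rw [norm_exp]
  congr 1
  simp [mul_re, mul_im]

lemma Real.exp_mul_le_exp_mul_add_exp_mul {k c t C : ℝ} (hc : c ≤ t) (hC : t ≤ C) :
    Real.exp (k * t) ≤ Real.exp (k * c) + Real.exp (k * C) := by
  rcases le_total 0 k with hk | hk
  · have := Real.exp_le_exp.2 (mul_le_mul_of_nonneg_left hC hk)
    linarith [Real.exp_pos (k * c)]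
  · have := Real.exp_le_exp.2 (mul_le_mul_of_nonpos_left hc hk)
    linarith [Real.exp_pos (k * C)]

lemma norm_cexp_two_pi_I_mul_int_mul_le_add {n : ℤ} {w z₁ z₂ : ℂ} (h₁ : z₁.im ≤ w.im)
    (h₂ : w.im ≤ z₂.im) :
    ‖cexp (2 * π * I * n * w)‖ ≤ ‖cexp (2 * π * I * n * z₁)‖ + ‖cexp (2 * π * I * n * z₂)‖ := by
  simp only [norm_cexp_two_pi_I_mul_int_mul, ← neg_mul]
  exact Real.exp_mul_le_exp_mul_add_exp_mul h₁ h₂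

lemma norm_div_two_pi_I_mul_int_le (c : ℂ) (n : ℤ) : ‖c / (2 * π * I * n)‖ ≤ ‖c‖ := by
  rcases eq_or_ne n 0 with rfl | hn
  · simp
  rw [norm_div]
  refine div_le_self (norm_nonneg c) ?_
  have hn' : (1 : ℝ) ≤ |(n : ℝ)| := by exact_mod_cast Int.one_le_abs hn
  simp only [norm_mul, norm_ofNat, norm_real, Real.norm_eq_abs, abs_of_pos Real.pi_pos, norm_I,
    mul_one, norm_intCast]
  nlinarith [Real.pi_gt_three]

/-- The `n = 0` summand of the series is `0`, since `a 0 / 0 = 0`; the term `a 0 * z` replaces it. -/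
noncomputable def fourierPrimitive (a : ℤ → ℂ) (z : ℂ) : ℂ :=
  a 0 * z + ∑' n : ℤ, a n / (2 * π * I * n) * cexp (2 * π * I * n * z)

variable {a : ℤ → ℂ}

lemma hasDerivAt_fourierPrimitive_term (n : ℤ) (z : ℂ) :
    HasDerivAt (fun w ↦ a n / (2 * π * I * n) * cexp (2 * π * I * n * w))
      (if n = 0 then 0 else a n * cexp (2 * π * I * n * z)) z := by
  rcases eq_or_ne n 0 with rfl | hn
  · simpa using hasDerivAt_const z (0 : ℂ)
  have hc : (2 * π * I * n : ℂ) ≠ 0 := by simp [hn, Real.pi_ne_zero]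
  refine ((((hasDerivAt_id z).const_mul (2 * π * I * n)).cexp).const_mul
    (a n / (2 * π * I * n))).congr_deriv ?_
  simp only [hn, if_false, id, mul_one]
  field_simp

lemma fourierPrimitive_add_one (z : ℂ) :
    fourierPrimitive a (z + 1) = fourierPrimitive a z + a 0 := by
  have hperiodic (n : ℤ) : cexp (2 * π * I * n * (z + 1)) = cexp (2 * π * I * n * z) := by
    rw [show 2 * π * I * n * (z + 1) = 2 * π * I * n * z + n * (2 * π * I) by ring,
      Complex.exp_add, exp_int_mul_two_pi_mul_I, mul_one]
  simp only [fourierPrimitive, hperiodic]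
  ring

theorem hasDerivAt_fourierPrimitive
    (hsum : ∀ z : ℂ, 0 < z.im → Summable fun n : ℤ ↦ a n * cexp (2 * π * I * n * z))
    {z : ℂ} (hz : 0 < z.im) :
    HasDerivAt (fourierPrimitive a) (∑' n : ℤ, a n * cexp (2 * π * I * n * z)) z := by
  set z₁ : ℂ := z.im / 2 * I
  set z₂ : ℂ := (z.im + 1) * I
  set strip : Set ℂ := {w | z₁.im < w.im ∧ w.im < z₂.im}
  have hz₁ : 0 < z₁.im := by simp [z₁]; positivity
  have hz₂ : 0 < z₂.im := by simp [z₂]; positivity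
  have hz_mem : z ∈ strip := by simp [strip, z₁, z₂]; linarith
  have hnorm (w : ℂ) (hw : 0 < w.im) : Summable fun n : ℤ ↦ ‖a n * cexp (2 * π * I * n * w)‖ :=
    summable_norm_iff.2 (hsum w hw)
  have hbound (n : ℤ) (w : ℂ) (hw : w ∈ strip) :
      ‖if n = 0 then 0 else a n * cexp (2 * π * I * n * w)‖ ≤
        ‖a n * cexp (2 * π * I * n * z₁)‖ + ‖a n * cexp (2 * π * I * n * z₂)‖ := by
    split_ifs
    · rw [norm_zero]; positivity
    simp only [norm_mul, ← mul_add]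
    exact mul_le_mul_of_nonneg_left
      (norm_cexp_two_pi_I_mul_int_mul_le_add hw.1.le hw.2.le) (norm_nonneg _)
  have hsum_primitive :
      Summable fun n : ℤ ↦ a n / (2 * π * I * n) * cexp (2 * π * I * n * z) :=
    .of_norm_bounded (hnorm z hz) fun n ↦ by
      rw [norm_mul, norm_mul]
      exact mul_le_mul_of_nonneg_right (norm_div_two_pi_I_mul_int_le _ _) (norm_nonneg _)
  have hseries := hasDerivAt_tsum_of_isPreconnected ((hnorm z₁ hz₁).add (hnorm z₂ hz₂))
    ((isOpen_lt continuous_const continuous_im).inter (isOpen_lt continuous_im continuous_const))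
    ((convex_halfSpace_im_gt _).inter (convex_halfSpace_im_lt _)).isPreconnected
    (fun n w _ ↦ hasDerivAt_fourierPrimitive_term n w) hbound hz_mem hsum_primitive hz_mem
  have hlinear : HasDerivAt (fun w ↦ a 0 * w) (a 0) z := by
    simpa using (hasDerivAt_id z).const_mul (a 0)
  rw [(hsum z hz).tsum_eq_add_tsum_ite 0]
  exact (hlinear.add hseries).congr_deriv (by simp)

end FourierPrimitive

lemma apply_eq_zero_of_pow_eq_one {G A : Type*} [Monoid G] [AddCommGroup A] [IsAddTorsionFree A]
    {K : G → A} (hK : ∀ g g', K (g * g') = K g + K g') {g : G} {n : ℕ} (hn : n ≠ 0)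
    (hg : g ^ n = 1) : K g = 0 := by
  have hK_one : K 1 = 0 := by simpa using hK 1 1
  have hK_pow (k : ℕ) : K (g ^ k) = k • K g := by
    induction k with
    | zero => simpa using hK_one
    | succ k ih => rw [pow_succ, hK, ih, succ_nsmul]
  have := hK_pow n
  rw [hg, hK_one, eq_comm, nsmul_eq_zero_iff] at this
  exact this.resolve_right hn

namespace UpperHalfPlane

open ModularGroup

noncomputable def periodMap (Φ : ℂ → ℂ) (γ : SL(2, ℤ)) : ℂ := Φ (γ • I : ℍ) - Φ I

section Primitive

variable {Φ : ℂ → ℂ} {f : ℍ → ℂ} (hΦ : ∀ τ : ℍ, HasDerivAt Φ (f τ) τ)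
  (hf : ∀ (γ : SL(2, ℤ)) (τ : ℍ), f (γ • τ) = denom γ τ ^ 2 * f τ)
include hΦ hf

lemma hasDerivAt_apply_smul_sub_apply (γ : SL(2, ℤ)) (τ : ℍ) :
    HasDerivAt (fun z ↦ Φ (γ • ofComplex z : ℍ) - Φ z) 0 τ := by
  have hdet : (γ : GL (Fin 2) ℝ).val.det = 1 := by
    rw [← Matrix.GeneralLinearGroup.val_det_apply]; simp
  have hsmul := (hasStrictDerivAt_smul (hdet ▸ one_pos) τ).hasDerivAt
  have hcomp := (hΦ (γ • ofComplex τ)).comp (τ : ℂ) hsmul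
  rw [ofComplex_apply] at hcomp
  have hden := denom_ne_zero γ τ
  refine (hcomp.sub (hΦ τ)).congr_deriv ?_
  rw [hf, hdet, Complex.ofReal_one]
  field_simp
  ring

lemma apply_smul_sub_apply_eq_periodMap (γ : SL(2, ℤ)) (τ : ℍ) :
    Φ (γ • τ : ℍ) - Φ τ = periodMap Φ γ := by
  have hderiv (z : ℂ) (hz : 0 < z.im) := hasDerivAt_apply_smul_sub_apply hΦ hf γ ⟨z, hz⟩
  have hconst := isOpen_upperHalfPlaneSet.is_const_of_deriv_eq_zero
    (convex_halfSpace_im_gt 0).isPreconnected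
    (fun z hz ↦ (hderiv z hz).differentiableAt.differentiableWithinAt)
    (fun z hz ↦ (hderiv z hz).deriv) τ.im_pos I.im_pos
  simpa only [ofComplex_apply, periodMap] using hconst

lemma periodMap_mul (γ δ : SL(2, ℤ)) :
    periodMap Φ (γ * δ) = periodMap Φ γ + periodMap Φ δ := by
  rw [← apply_smul_sub_apply_eq_periodMap hΦ hf γ (δ • I), periodMap, periodMap, mul_smul]
  ring

lemma periodMap_T_eq_zero : periodMap Φ T = 0 := by
  have hS : periodMap Φ S⁻¹ = 0 :=
    apply_eq_zero_of_pow_eq_one (periodMap_mul hΦ hf) four_ne_zero (by decide)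
  have hST : periodMap Φ (S * T) = 0 :=
    apply_eq_zero_of_pow_eq_one (periodMap_mul hΦ hf) (by norm_num : 6 ≠ 0) (by decide)
  rw [← inv_mul_cancel_left S T, periodMap_mul hΦ hf, hS, hST, add_zero]

end Primitive

end UpperHalfPlane

theorem constant_term_eq_zero_of_weakly_holomorphic_weight_two_general
    (h : ℍ → ℂ)
    (hmod : ∀ γ : SL(2, ℤ), ∀ τ : ℍ,
      h (γ • τ)
        = (((γ : Matrix (Fin 2) (Fin 2) ℤ) 1 0 : ℂ) * (τ : ℂ)
            + ((γ : Matrix (Fin 2) (Fin 2) ℤ) 1 1 : ℂ)) ^ 2 * h τ)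
    (a : ℤ → ℂ)
    (hsum : ∀ τ : ℍ,
      HasSum (fun n : ℤ =>
        a n * Complex.exp (2 * (π : ℂ) * Complex.I * (n : ℂ) * (τ : ℂ))) (h τ)) :
    a 0 = 0 := by
  have hΦ (τ : ℍ) : HasDerivAt (fourierPrimitive a) (h τ) τ :=
    (hsum τ).tsum_eq ▸ hasDerivAt_fourierPrimitive (fun z hz ↦ (hsum ⟨z, hz⟩).summable) τ.im_pos
  have hweight (γ : SL(2, ℤ)) (τ : ℍ) : h (γ • τ) = UpperHalfPlane.denom γ τ ^ 2 * h τ := by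
    simpa [ModularGroup.denom_apply] using hmod γ τ
  have hT_smul_I : ((ModularGroup.T • UpperHalfPlane.I : ℍ) : ℂ) = UpperHalfPlane.I + 1 := by
    rw [UpperHalfPlane.modular_T_smul, UpperHalfPlane.coe_vadd, add_comm, Complex.ofReal_one]
  have hT := UpperHalfPlane.periodMap_T_eq_zero hΦ hweight
  rwa [UpperHalfPlane.periodMap, hT_smul_I, fourierPrimitive_add_one, add_sub_cancel_left] at hT

/-- A holomorphic function on the upper half-plane that is modular of weight 2
for `SL₂(ℤ)` and has a Fourier expansion `∑ₙ a(n) e^{2πinτ}` with only finitely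
many negative terms (a weakly holomorphic modular form of weight 2 and level
one) has vanishing constant term: `a 0 = 0`. -/
theorem constant_term_eq_zero_of_weakly_holomorphic_weight_two
    (h : ℍ → ℂ)
    (hhol : MDifferentiable 𝓘(ℂ) 𝓘(ℂ) h)
    (hmod : ∀ γ : SL(2, ℤ), ∀ τ : ℍ,
      h (γ • τ)
        = (((γ : Matrix (Fin 2) (Fin 2) ℤ) 1 0 : ℂ) * (τ : ℂ)
            + ((γ : Matrix (Fin 2) (Fin 2) ℤ) 1 1 : ℂ)) ^ 2 * h τ)
    (M : ℕ) (a : ℤ → ℂ)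
    (hbound : ∀ n : ℤ, n < -(M : ℤ) → a n = 0)
    (hsum : ∀ τ : ℍ,
      HasSum (fun n : ℤ =>
        a n * Complex.exp (2 * (π : ℂ) * Complex.I * (n : ℂ) * (τ : ℂ))) (h τ)) :
    a 0 = 0 :=
  constant_term_eq_zero_of_weakly_holomorphic_weight_two_general h hmod a hsum
end
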